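/- arXiv:1909.12461 — 2 statements merged into one kernel-verified Lean document; each statement's English description precedes it below -/
import Mathlib

section
/- Let V be a finite-dimensional real vector space with symmetric positive definite bilinear forms a and s, and let W ⊆ V be a subspace with φ ∈ W. Then ψ ∈ V and μ ∈ W solve the saddle-point system a(ψ, v) + s(v, μ) = 0 for all v ∈ V and s(ψ − φ, ν) = 0 for all ν ∈ W if and only if ψ minimizes a(ψ', ψ') over all ψ' ∈ V satisfying s(ψ', ν) = s(φ, ν) for all ν ∈ W. Moreover such a solution (ψ, μ) exists. -/
/-! The constraint set is the affine subspace `φ + K`, where `K` is the `s`-orthogonal of `W`.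
Expanding `a (ψ + t w) (ψ + t w)` in `t` shows that `ψ` minimizes the energy on `φ + K` iff
`a ψ` vanishes on `K`. In finite dimension the annihilator of `K` is the image of `W` in the dual
under `s`, so this happens iff `a ψ = s (-μ)` for some `μ ∈ W`: the multiplier. A minimizer exists
because `a` is definite, so `V = K ⊕ K^⊥` for `a`, and the `K^⊥`-component of `φ` is one. -/

open LinearMap (BilinForm)

namespace LinearMap.BilinForm

section CommRing

variable {R V : Type*} [CommRing R] [AddCommGroup V] [Module R V] {B : BilinForm R V}

theorem IsSymm.apply_add_apply_add (hB : B.IsSymm) (x y : V) :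
    B (x + y) (x + y) = B x x + 2 * B x y + B y y := by
  simp only [map_add, LinearMap.add_apply, hB.eq y x]
  ring

end CommRing

section Field

variable {𝕜 V : Type*} [Field 𝕜] [AddCommGroup V] [Module 𝕜 V] [FiniteDimensional 𝕜 V]

theorem dualAnnihilator_orthogonal (B : BilinForm 𝕜 V) (W : Submodule 𝕜 V) :
    (B.orthogonal W).dualAnnihilator = W.map B := by
  have : B.orthogonal W = (W.map B).dualCoannihilator := by
    ext; simp [Submodule.mem_dualCoannihilator]
  rw [this, Subspace.dualCoannihilator_dualAnnihilator_eq]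

theorem exists_mem_add_apply_eq_zero_iff (s : BilinForm 𝕜 V) (W : Submodule 𝕜 V)
    (f : Module.Dual 𝕜 V) :
    (∃ μ ∈ W, ∀ v, f v + s v μ = 0) ↔ ∀ w ∈ orthogonal s.flip W, f w = 0 := by
  rw [← Submodule.mem_dualAnnihilator, dualAnnihilator_orthogonal, Submodule.mem_map]
  constructor
  · rintro ⟨μ, hμ, h⟩
    refine ⟨-μ, neg_mem hμ, LinearMap.ext fun v => ?_⟩
    simpa using neg_eq_of_add_eq_zero_left (h v)
  · rintro ⟨ν, hν, rfl⟩
    exact ⟨-ν, neg_mem hν, fun v => by simp⟩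

theorem IsSymm.exists_sub_mem_forall_apply_eq_zero [PartialOrder 𝕜] {B : BilinForm 𝕜 V}
    (hB : B.IsSymm) (hpd : ∀ v, v ≠ 0 → 0 < B v v) (K : Submodule 𝕜 V) (φ : V) :
    ∃ x, x - φ ∈ K ∧ ∀ w ∈ K, B x w = 0 := by
  have hdisj : Disjoint K (B.orthogonal K) := by
    rw [Submodule.disjoint_def]
    intro v hvK hv
    by_contra hv0
    exact (hpd v hv0).ne' (hv v hvK)
  obtain ⟨k, r, hk, hr, rfl⟩ := Submodule.codisjoint_iff_exists_add_eq.1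
    ((isCompl_orthogonal_iff_disjoint hB.isRefl).2 hdisj).codisjoint φ
  refine ⟨r, by simpa using K.neg_mem hk, fun w hw => ?_⟩
  rw [hB.eq]
  exact hr w hw

end Field

section OrderedField

variable {𝕜 V : Type*} [Field 𝕜] [LinearOrder 𝕜] [IsStrictOrderedRing 𝕜]
  [AddCommGroup V] [Module 𝕜 V] {B : BilinForm 𝕜 V}

theorem IsSymm.apply_eq_zero_of_forall_le_apply_add_smul (hB : B.IsSymm) {x w : V}
    (h : ∀ t : 𝕜, B x x ≤ B (x + t • w) (x + t • w)) : B x w = 0 := by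
  have hquad : ∀ t : 𝕜, 0 ≤ B w w * (t * t) + 2 * B x w * t + 0 := fun t => by
    have := h t
    simp only [hB.apply_add_apply_add, map_smul, LinearMap.smul_apply, smul_eq_mul] at this
    linarith
  have := discrim_le_zero hquad
  rw [discrim] at this
  nlinarith [sq_nonneg (B x w)]

theorem IsSymm.forall_sub_mem_le_iff (hB : B.IsSymm) (hpsd : ∀ v, 0 ≤ B v v)
    {K : Submodule 𝕜 V} {φ x : V} (hx : x - φ ∈ K) :
    (∀ y, y - φ ∈ K → B x x ≤ B y y) ↔ ∀ w ∈ K, B x w = 0 := by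
  constructor
  · intro hmin w hw
    refine hB.apply_eq_zero_of_forall_le_apply_add_smul fun t => hmin _ ?_
    rw [add_sub_right_comm]
    exact K.add_mem hx (K.smul_mem t hw)
  · intro horth y hy
    have hw : y - x ∈ K := by simpa using K.sub_mem hy hx
    calc B x x ≤ B x x + 2 * B x (y - x) + B (y - x) (y - x) := by
          rw [horth _ hw]; linarith [hpsd (y - x)]
      _ = B y y := by rw [← hB.apply_add_apply_add, add_sub_cancel]

end OrderedField

end LinearMap.BilinForm

theorem saddle_point_equiv_minimization_general {V : Type*} [AddCommGroup V] [Module ℝ V]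
    [FiniteDimensional ℝ V]
    (a s : LinearMap.BilinForm ℝ V)
    (hasym : ∀ x y : V, a x y = a y x)
    (hapd : ∀ v : V, v ≠ 0 → 0 < a v v)
    (W : Submodule ℝ V) (φ : V) :
    (∀ ψ : V,
      (∃ μ ∈ W, (∀ v : V, a ψ v + s v μ = 0) ∧ (∀ ν ∈ W, s (ψ - φ) ν = 0)) ↔
      ((∀ ν ∈ W, s ψ ν = s φ ν) ∧
        ∀ ψ' : V, (∀ ν ∈ W, s ψ' ν = s φ ν) → a ψ ψ ≤ a ψ' ψ')) ∧
    (∃ ψ : V, ∃ μ ∈ W,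
      (∀ v : V, a ψ v + s v μ = 0) ∧ (∀ ν ∈ W, s (ψ - φ) ν = 0)) := by
  have ha : a.IsSymm := LinearMap.BilinForm.isSymm_def.2 hasym
  have hpsd : ∀ v, 0 ≤ a v v := fun v => by
    rcases eq_or_ne v 0 with rfl | hv
    · simp
    · exact (hapd v hv).le
  set K := LinearMap.BilinForm.orthogonal s.flip W
  have hK : ∀ ψ, (∀ ν ∈ W, s ψ ν = s φ ν) ↔ ψ - φ ∈ K := fun ψ => by
    simp [K, sub_eq_zero]
  refine ⟨fun ψ => ?_, ?_⟩
  · have hK' : (∀ ν ∈ W, s (ψ - φ) ν = 0) ↔ ψ - φ ∈ K := Iff.rfl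
    simp only [← and_assoc, exists_and_right, hK, hK']
    rw [LinearMap.BilinForm.exists_mem_add_apply_eq_zero_iff]
    exact ⟨fun ⟨h, hψ⟩ => ⟨hψ, (ha.forall_sub_mem_le_iff hpsd hψ).2 h⟩,
      fun ⟨hψ, h⟩ => ⟨(ha.forall_sub_mem_le_iff hpsd hψ).1 h, hψ⟩⟩
  · obtain ⟨ψ, hψ, horth⟩ := ha.exists_sub_mem_forall_apply_eq_zero hapd K φ
    obtain ⟨μ, hμ, hμψ⟩ :=
      (LinearMap.BilinForm.exists_mem_add_apply_eq_zero_iff s W (a ψ)).2 horth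
    exact ⟨ψ, μ, hμ, hμψ, hψ⟩

/-- equivalence of the saddle-point (Lagrange multiplier) system
and the constrained energy minimization problem, together with existence. -/
theorem saddle_point_equiv_minimization {V : Type*} [AddCommGroup V] [Module ℝ V]
    [FiniteDimensional ℝ V]
    (a s : LinearMap.BilinForm ℝ V)
    (hasym : ∀ x y : V, a x y = a y x)
    (hapd : ∀ v : V, v ≠ 0 → 0 < a v v)
    (hssym : ∀ x y : V, s x y = s y x)
    (hspd : ∀ v : V, v ≠ 0 → 0 < s v v)
    (W : Submodule ℝ V) (φ : V) (hφ : φ ∈ W) :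
    (∀ ψ : V,
      (∃ μ ∈ W, (∀ v : V, a ψ v + s v μ = 0) ∧ (∀ ν ∈ W, s (ψ - φ) ν = 0)) ↔
      ((∀ ν ∈ W, s ψ ν = s φ ν) ∧
        ∀ ψ' : V, (∀ ν ∈ W, s ψ' ν = s φ ν) → a ψ ψ ≤ a ψ' ψ')) ∧
    (∃ ψ : V, ∃ μ ∈ W,
      (∀ v : V, a ψ v + s v μ = 0) ∧ (∀ ν ∈ W, s (ψ - φ) ν = 0)) :=
  saddle_point_equiv_minimization_general a s hasym hapd W φ
end

section
/- Let a and s be symmetric bilinear forms on a real vector space V with a an inner product, and suppose the inf-sup condition holds: for every ν in a finite-dimensional subspace W ⊆ V, sup over w ∈ V, w ≠ 0 of s(w, ν)/√(a(w, w)) ≥ β √(s(ν, ν)) with β > 0. Then for every φ ∈ W the constrained minimization problem min{a(ψ, ψ) : ψ ∈ V, s(ψ, ν) = s(φ, ν) for all ν ∈ W} has a solution. -/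
/-!
The constraint set is the affine space `φ + K`, where `K` is the `s`-orthogonal of `W`,
`K = ⋂_{ν ∈ W} ker (s · ν)`. For `ν ≠ 0` in `W` the inf-sup condition makes the supremum of
`s w ν / ‖w‖` positive, hence finite, so `s · ν` is a bounded functional and `K` is closed.
The minimizer is then `φ - P_K φ`, which is orthogonal to `K`, and Pythagoras shows that it has
the least norm on `φ + K`.
-/

open scoped RealInnerProductSpace

/-- `⨆` of an unbounded real family is the junk value `0`, so a positive supremum is a true one. -/
lemma Real.bddAbove_range_of_iSup_pos {ι : Sort*} {f : ι → ℝ} (h : 0 < ⨆ i, f i) :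
    BddAbove (Set.range f) := by
  by_contra hf
  rw [Real.iSup_of_not_bddAbove hf] at h
  exact h.false

section BoundedFunctional

variable {E : Type*} [NormedAddCommGroup E] [Module ℝ E]

lemma LinearMap.continuous_of_le_mul_norm (f : E →ₗ[ℝ] ℝ) (C : ℝ) (hf : ∀ x, f x ≤ C * ‖x‖) :
    Continuous f := by
  refine AddMonoidHomClass.continuous_of_bound f C fun x => abs_le.2 ⟨?_, hf x⟩
  have := hf (-x)
  rw [map_neg, norm_neg] at this
  linarith

lemma LinearMap.continuous_of_bddAbove_div_norm (f : E →ₗ[ℝ] ℝ)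
    (hf : BddAbove (Set.range fun x : {x : E // x ≠ 0} => f x / ‖(x : E)‖)) : Continuous f := by
  obtain ⟨C, hC⟩ := hf
  refine f.continuous_of_le_mul_norm C fun x => ?_
  rcases eq_or_ne x 0 with rfl | hx
  · simp
  · exact (div_le_iff₀ (norm_pos_iff.2 hx)).1 (hC ⟨⟨x, hx⟩, rfl⟩)

end BoundedFunctional

lemma LinearMap.BilinForm.isClosed_flip_orthogonal {R M : Type*} [CommRing R] [TopologicalSpace R]
    [T2Space R] [AddCommGroup M] [Module R M] [TopologicalSpace M] (s : LinearMap.BilinForm R M)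
    (W : Submodule R M) (hs : ∀ ν ∈ W, Continuous fun w => s w ν) :
    IsClosed (s.flip.orthogonal W : Set M) := by
  have hK : (s.flip.orthogonal W : Set M) = ⋂ ν ∈ W, {w | s w ν = 0} := by
    ext w
    simp
  rw [hK]
  exact isClosed_biInter fun ν hν => isClosed_eq (hs ν hν) continuous_const

section InnerProductSpace

variable {V : Type*} [NormedAddCommGroup V] [InnerProductSpace ℝ V]

theorem Submodule.exists_inner_self_le_of_sub_mem (K : Submodule ℝ V) [K.HasOrthogonalProjection]
    (φ : V) : ∃ ψ, ψ - φ ∈ K ∧ ∀ ψ', ψ' - φ ∈ K → ⟪ψ, ψ⟫ ≤ ⟪ψ', ψ'⟫ := by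
  set ψ := φ - K.starProjection φ
  have hψ : ψ - φ ∈ K := by simp [ψ]
  refine ⟨ψ, hψ, fun ψ' hψ' => ?_⟩
  have hd : ψ' - ψ ∈ K := by simpa using K.sub_mem hψ' hψ
  have horth : ⟪ψ, ψ' - ψ⟫ = 0 :=
    K.inner_left_of_mem_orthogonal hd (K.sub_starProjection_mem_orthogonal φ)
  calc ⟪ψ, ψ⟫ ≤ ⟪ψ, ψ⟫ + ⟪ψ' - ψ, ψ' - ψ⟫ := le_add_of_nonneg_right real_inner_self_nonneg
    _ = ⟪ψ + (ψ' - ψ), ψ + (ψ' - ψ)⟫ := by rw [real_inner_add_add_self, horth]; ring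
    _ = ⟪ψ', ψ'⟫ := by rw [add_sub_cancel]

lemma continuous_apply_of_infsup (s : LinearMap.BilinForm ℝ V) (W : Submodule ℝ V)
    (hspdW : ∀ v ∈ W, v ≠ 0 → 0 < s v v) (β : ℝ) (hβ : 0 < β)
    (hinfsup : ∀ ν ∈ W,
      β * Real.sqrt (s ν ν) ≤ ⨆ w : {w : V // w ≠ 0}, s w ν / Real.sqrt ⟪(w : V), (w : V)⟫) :
    ∀ ν ∈ W, Continuous fun w => s w ν := by
  intro ν hν
  rcases eq_or_ne ν 0 with rfl | hν0
  · simpa using continuous_const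
  have hpos : 0 < β * Real.sqrt (s ν ν) := mul_pos hβ (Real.sqrt_pos.2 (hspdW ν hν hν0))
  have hsup := hpos.trans_le (hinfsup ν hν)
  simp_rw [← norm_eq_sqrt_real_inner] at hsup
  exact (s.flip ν).continuous_of_bddAbove_div_norm (Real.bddAbove_range_of_iSup_pos hsup)

end InnerProductSpace

theorem infsup_implies_minimizer_exists_general {V : Type*} [NormedAddCommGroup V]
    [InnerProductSpace ℝ V] [CompleteSpace V]
    (s : LinearMap.BilinForm ℝ V)
    (W : Submodule ℝ V)
    (hspdW : ∀ v ∈ W, v ≠ 0 → 0 < s v v)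
    (β : ℝ) (hβ : 0 < β)
    (hinfsup : ∀ ν ∈ W,
      β * Real.sqrt (s ν ν) ≤ ⨆ w : {w : V // w ≠ 0}, s w ν / Real.sqrt ⟪(w : V), (w : V)⟫) :
    ∀ φ ∈ W, ∃ ψ : V,
      (∀ ν ∈ W, s ψ ν = s φ ν) ∧
      ∀ ψ' : V, (∀ ν ∈ W, s ψ' ν = s φ ν) → ⟪ψ, ψ⟫ ≤ ⟪ψ', ψ'⟫ := by
  intro φ _
  set K := s.flip.orthogonal W
  have hK : IsClosed (K : Set V) :=
    s.isClosed_flip_orthogonal W (continuous_apply_of_infsup s W hspdW β hβ hinfsup)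
  have : CompleteSpace K := hK.completeSpace_coe
  have hconstraint : ∀ ψ, ψ - φ ∈ K ↔ ∀ ν ∈ W, s ψ ν = s φ ν := by
    simp [K, sub_eq_zero]
  obtain ⟨ψ, hψ, hmin⟩ := K.exists_inner_self_le_of_sub_mem φ
  exact ⟨ψ, (hconstraint ψ).1 hψ, fun ψ' h => hmin ψ' ((hconstraint ψ').2 h)⟩

/-- the inf-sup condition implies solvability of the constrained
energy minimization problem. -/
theorem infsup_implies_minimizer_exists {V : Type*} [NormedAddCommGroup V]
    [InnerProductSpace ℝ V] [CompleteSpace V]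
    (s : LinearMap.BilinForm ℝ V)
    (hssym : ∀ x y : V, s x y = s y x)
    (hspsd : ∀ v : V, 0 ≤ s v v)
    (W : Submodule ℝ V) [FiniteDimensional ℝ W]
    (hspdW : ∀ v ∈ W, v ≠ 0 → 0 < s v v)
    (β : ℝ) (hβ : 0 < β)
    (hinfsup : ∀ ν ∈ W,
      β * Real.sqrt (s ν ν) ≤ ⨆ w : {w : V // w ≠ 0}, s w ν / Real.sqrt ⟪(w : V), (w : V)⟫) :
    ∀ φ ∈ W, ∃ ψ : V,
      (∀ ν ∈ W, s ψ ν = s φ ν) ∧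
      ∀ ψ' : V, (∀ ν ∈ W, s ψ' ν = s φ ν) → ⟪ψ, ψ⟫ ≤ ⟪ψ', ψ'⟫ :=
  infsup_implies_minimizer_exists_general s W hspdW β hβ hinfsup
end
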